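/- arXiv:2603.02111 — 2 statements merged into one kernel-verified Lean document; each statement's English description precedes it below -/
import Mathlib

section
/- Let q be a prime power and let E ⊆ H_1(F_q) be a full-direction horizontal Heisenberg Kakeya set, i.e. for every ω ∈ D_1 there exists a horizontal line L ⊆ E with Dir(L) = ω. Then |E| ≥ q^3 / 25. Moreover, for M_E(ω) = max over horizontal lines L with Dir(L) = ω of |E ∩ L|, any set E ⊆ H_1(F_q) satisfies ∑_{ω ∈ D_1} M_E(ω)^2 ≤ 25 q |E|. -/
/-!
`K` plays the role of the finite field `F_q` with `q = Fintype.card K` elements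
(the cardinality of a finite field is automatically a prime power).
The Heisenberg group `H₁(F_q)` is identified with `K × K × K`.
The set `D₁` of non-vertical (refined) projective directions
`{[a : b : c] ∈ P²(F_q) : (a,b) ≠ (0,0)}` is identified with `Option K × K`:
`(some m, γ)` corresponds to `[1 : m : γ]` and `(none, γ)` to `[0 : 1 : γ]`
(every element of `D₁` has a unique such normal form).
-/

noncomputable section

open Finset

/-- The point with parameter `s` of the horizontal line with refined direction
`ω ∈ D₁` indexed by `τ ∈ F_q`.  For `ω = [1 : m : γ]` the `q` horizontal lines
with `Dir L = ω` are `{(x, m x - γ, τ + γ x) : x ∈ F_q}`, `τ ∈ F_q`; for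
`ω = [0 : 1 : γ]` they are `{(γ, y, τ + γ y) : y ∈ F_q}`, `τ ∈ F_q`. -/
def lineRd {K : Type*} [Field K] (ω : Option K × K) (τ : K) (s : K) : K × K × K :=
  match ω.1 with
  | some m => (s, m * s - ω.2, τ + ω.2 * s)
  | none => (ω.2, s, τ + ω.2 * s)

/-- The refined-direction maximal function `M^rd F` on `D₁ ≃ Option K × K`:
the maximum, over the `q` horizontal lines `L` with `Dir L = ω`, of the sum of
`|F|` along `L`. -/
def Mrd {K : Type*} [Field K] [Fintype K] (Fc : K × K × K → ℂ) (ω : Option K × K) : ℝ :=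
  Finset.univ.sup' ⟨(0 : K), Finset.mem_univ _⟩
    fun τ => ∑ s : K, ‖Fc (lineRd ω τ s)‖

/-- `ℓ^r` norm of a complex-valued function on a finite set. -/
def lpNormC {X : Type*} [Fintype X] (r : ℝ) (g : X → ℂ) : ℝ :=
  (∑ x, ‖g x‖ ^ r) ^ (1 / r)

/-- `ℓ^r` norm of a real-valued function on a finite set. -/
def lpNormR {X : Type*} [Fintype X] (r : ℝ) (g : X → ℝ) : ℝ :=
  (∑ x, |g x| ^ r) ^ (1 / r)

/-!
Fourier-expand in the central variable with a primitive character `ψ`: `q` times the sum of `F`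
along the line of direction `ω` at height `τ` is `∑ ξ, ψ (ξ τ) B_ξ(ω)`, where `B_ξ(ω)` sums the
`ξ`-th vertical Fourier coefficient `g_ξ` of `F` along the projected line in the plane, twisted by
`ψ (ξ γ s)`. Any two distinct points of the affine plane lie on exactly one of its `q² + q` lines
and every point lies on `q + 1` of them, so `∑_ω |B_ξ(ω)|² = q ‖g_ξ‖² + ⟨g_ξ, T_ξ g_ξ⟩`, where `T_ξ`
has kernel `ψ (ξ [w, z])` for the symplectic form `[·, ·]`. For `ξ ≠ 0`, `T_ξ` is a two-dimensional
Fourier transform, of norm `q`, so the sum is at most `2 q ‖g_ξ‖²`; for `ξ = 0` it is at most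
`2 q² ‖g_0‖²`. Bounding the maximum over `τ` by `q⁻¹ ∑_ξ |B_ξ(ω)|`, separating `ξ = 0` in
Cauchy–Schwarz and using Parseval in `t` gives `∑_ω (M^rd F)(ω)² ≤ 4 q ‖F‖²`. For a Kakeya set all
`q² + q` maxima equal `q`.
-/

open ComplexConjugate

theorem sum_norm_sq_sum_mul_of_orthogonal {α ι : Type*} [Fintype α] [Fintype ι] [DecidableEq ι]
    (e : α → ι → ℂ) (N : ℝ)
    (he : ∀ i j, ∑ x, e x i * conj (e x j) = if i = j then (N : ℂ) else 0) (a : ι → ℂ) :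
    ∑ x, ‖∑ i, a i * e x i‖ ^ 2 = N * ∑ i, ‖a i‖ ^ 2 := by
  apply Complex.ofReal_injective
  push_cast
  simp_rw [← Complex.mul_conj', map_sum, map_mul, sum_mul_sum]
  calc ∑ x, ∑ i, ∑ j, a i * e x i * (conj (a j) * conj (e x j))
      = ∑ i, ∑ j, a i * conj (a j) * ∑ x, e x i * conj (e x j) := by
        rw [sum_comm]; refine sum_congr rfl fun i _ => ?_
        rw [sum_comm]; refine sum_congr rfl fun j _ => ?_
        rw [mul_sum]; exact sum_congr rfl fun x _ => by ring
    _ = N * ∑ i, a i * conj (a i) := by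
        simp_rw [he, mul_ite, mul_zero, sum_ite_eq, mem_univ, if_true, mul_sum]
        exact sum_congr rfl fun i _ => by ring

theorem sq_sum_le_two_mul_sq_add {ι : Type*} [DecidableEq ι] (s : Finset ι) {a : ι}
    (ha : a ∈ s) (b : ι → ℝ) :
    (∑ i ∈ s, b i) ^ 2 ≤ 2 * b a ^ 2 + 2 * #s * ∑ i ∈ s.erase a, b i ^ 2 := by
  have hrest : (∑ i ∈ s.erase a, b i) ^ 2 ≤ #s * ∑ i ∈ s.erase a, b i ^ 2 :=
    (sq_sum_le_card_mul_sum_sq ..).trans <| mul_le_mul_of_nonneg_right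
      (by exact_mod_cast card_erase_le) (sum_nonneg fun i _ => sq_nonneg _)
  rw [← add_sum_erase s b ha]
  nlinarith [sq_nonneg (b a - ∑ i ∈ s.erase a, b i)]

theorem AddChar.mul_conj_eq_apply_sub {G : Type*} [AddCommGroup G] [Finite G]
    (ψ : AddChar G ℂ) (a b : G) : ψ a * conj (ψ b) = ψ (a - b) := by
  rw [← AddChar.map_neg_eq_conj, ← AddChar.map_add_eq_mul, sub_eq_add_neg]

section AffinePlane

variable {K : Type*} [Field K]

def symplecticForm (z w : K × K) : K := z.1 * w.2 - z.2 * w.1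

theorem symplecticForm_self (z : K × K) : symplecticForm z z = 0 := by
  rw [symplecticForm, mul_comm, sub_self]

theorem symplecticForm_swap (z w : K × K) : symplecticForm w z = -symplecticForm z w := by
  simp only [symplecticForm]; ring

def linePlane (ω : Option K × K) (s : K) : K × K :=
  match ω.1 with
  | some m => (s, m * s - ω.2)
  | none => (ω.2, s)

theorem lineRd_eq (ω : Option K × K) (τ s : K) :
    lineRd ω τ s = ((linePlane ω s).1, (linePlane ω s).2, τ + ω.2 * s) := by
  rcases ω with ⟨_ | m, γ⟩ <;> rfl

theorem symplecticForm_linePlane (ω : Option K × K) (s s' : K) :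
    symplecticForm (linePlane ω s') (linePlane ω s) = ω.2 * s - ω.2 * s' := by
  rcases ω with ⟨_ | m, γ⟩ <;> simp only [symplecticForm, linePlane] <;> ring

variable [Fintype K] {M : Type*} [AddCommMonoid M]

theorem sum_sum_mul_sub_of_ne {s s' : K} (h : s ≠ s') (f : K → K → M) :
    ∑ m, ∑ γ, f (m * s - γ) (m * s' - γ) = ∑ u, ∑ v, f u v := by
  simp only [← Fintype.sum_prod_type']
  refine Fintype.sum_bijective (fun p : K × K => (p.1 * s - p.2, p.1 * s' - p.2))
    (Function.Injective.bijective_of_finite fun p p' hp => ?_) _ _ fun _ => rfl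
  simp only [Prod.mk.injEq] at hp
  have h1 : p.1 = p'.1 := by
    have : (p.1 - p'.1) * (s - s') = 0 := by linear_combination hp.1 - hp.2
    simpa [sub_eq_zero, h] using this
  exact Prod.ext h1 (by linear_combination h1 * s - hp.1)

theorem sum_sum_mul_sub (s : K) (f : K → M) :
    ∑ m, ∑ γ, f (m * s - γ) = Fintype.card K • ∑ u, f u := by
  simp_rw [fun m => Fintype.sum_equiv (Equiv.subLeft (m * s)) (fun γ => f (m * s - γ)) f
    fun _ => rfl, sum_const, card_univ]

theorem sum_linePlane_pairs (Φ : K × K → K × K → M) :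
    ∑ ω : Option K × K, ∑ s, ∑ s', Φ (linePlane ω s) (linePlane ω s') =
      Fintype.card K • ∑ z, Φ z z + ∑ z, ∑ w, Φ z w := by
  classical
  have hsome : ∑ m, ∑ γ, ∑ s, ∑ s', Φ (s, m * s - γ) (s', m * s' - γ) =
      ∑ s, ∑ s', ∑ m, ∑ γ, Φ (s, m * s - γ) (s', m * s' - γ) := by
    refine (sum_congr rfl fun m _ => sum_comm).trans ?_
    rw [sum_comm]
    exact sum_congr rfl fun s _ => (sum_congr rfl fun m _ => sum_comm).trans sum_comm
  have hall : ∑ z, ∑ w, Φ z w = ∑ s, ∑ s', ∑ u, ∑ v, Φ (s, u) (s', v) := by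
    simp only [Fintype.sum_prod_type]
    exact sum_congr rfl fun s _ => sum_comm
  rw [Fintype.sum_prod_type, Fintype.sum_option]
  simp only [linePlane]
  rw [hall, hsome, Fintype.sum_prod_type, smul_sum, ← sum_add_distrib, ← sum_add_distrib]
  refine sum_congr rfl fun s _ => ?_
  rw [← add_sum_erase _ (fun s' => ∑ m, ∑ γ, Φ (s, m * s - γ) (s', m * s' - γ)) (mem_univ s),
    ← add_sum_erase _ (fun s' => ∑ u, ∑ v, Φ (s, u) (s', v)) (mem_univ s),
    sum_congr rfl fun s' hs' =>
      sum_sum_mul_sub_of_ne (ne_of_mem_erase hs').symm fun u v => Φ (s, u) (s', v),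
    sum_sum_mul_sub s fun u => Φ (s, u) (s, u)]
  abel

end AffinePlane

section Fourier

variable {K : Type*} [Field K] [Fintype K] [DecidableEq K] {ψ : AddChar K ℂ}

theorem sum_norm_sq_fourier (hψ : ψ.IsPrimitive) (f : K → ℂ) :
    ∑ ξ, ‖∑ t, f t * ψ (-(ξ * t))‖ ^ 2 = Fintype.card K * ∑ t, ‖f t‖ ^ 2 := by
  refine sum_norm_sq_sum_mul_of_orthogonal (fun ξ t => ψ (-(ξ * t))) _ (fun t t' => ?_) f
  simp_rw [AddChar.mul_conj_eq_apply_sub, show ∀ ξ : K, -(ξ * t) - -(ξ * t') = ξ * (t' - t)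
    from fun ξ => by ring, AddChar.sum_mulShift _ hψ, sub_eq_zero, eq_comm]
  simp

theorem sum_addChar_mul_fourier (hψ : ψ.IsPrimitive) (f : K → ℂ) (a : K) :
    ∑ ξ, ψ (ξ * a) * ∑ t, f t * ψ (-(ξ * t)) = Fintype.card K * f a := by
  calc ∑ ξ, ψ (ξ * a) * ∑ t, f t * ψ (-(ξ * t))
      = ∑ t, f t * ∑ ξ, ψ (ξ * (a - t)) := by
        simp_rw [mul_sum]
        rw [sum_comm]
        refine sum_congr rfl fun t _ => sum_congr rfl fun ξ _ => ?_
        rw [mul_left_comm, ← AddChar.map_add_eq_mul, mul_sub, sub_eq_add_neg]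
    _ = Fintype.card K * f a := by
        simp only [AddChar.sum_mulShift _ hψ, sub_eq_zero, Nat.cast_ite, Nat.cast_zero, mul_ite,
          mul_zero, sum_ite_eq, mem_univ, if_true, mul_comm]

theorem sum_norm_sq_symplectic_fourier (hψ : ψ.IsPrimitive) {ξ : K} (hξ : ξ ≠ 0)
    (g : K × K → ℂ) :
    ∑ z, ‖∑ w, g w * ψ (ξ * symplecticForm z w)‖ ^ 2 =
      Fintype.card K ^ 2 * ∑ w, ‖g w‖ ^ 2 := by
  refine sum_norm_sq_sum_mul_of_orthogonal (fun z w => ψ (ξ * symplecticForm z w)) _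
    (fun w w' => ?_) g
  have hsplit : ∀ z : K × K, ξ * symplecticForm z w - ξ * symplecticForm z w' =
      z.1 * (ξ * (w.2 - w'.2)) + z.2 * (-ξ * (w.1 - w'.1)) := fun z => by
    simp only [symplecticForm]; ring
  simp_rw [AddChar.mul_conj_eq_apply_sub, hsplit, AddChar.map_add_eq_mul,
    Fintype.sum_prod_type, ← mul_sum, ← sum_mul, AddChar.sum_mulShift _ hψ,
    Nat.cast_ite, Nat.cast_zero, mul_eq_zero, neg_eq_zero, hξ, false_or, sub_eq_zero,
    Prod.ext_iff]
  split_ifs <;> simp_all [sq]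

end Fourier

section TwistedXray

variable {K : Type*} [Field K] [Fintype K] (ψ : AddChar K ℂ) (ξ : K) (g : K × K → ℂ)

def twistedXray (ω : Option K × K) : ℂ := ∑ s, g (linePlane ω s) * ψ (ξ * (ω.2 * s))

def twistedPairing : ℂ := ∑ z, ∑ w, g z * conj (g w) * ψ (ξ * symplecticForm w z)

theorem sum_norm_sq_twistedXray :
    ∑ ω, (‖twistedXray ψ ξ g ω‖ : ℂ) ^ 2 =
      Fintype.card K * ∑ z, (‖g z‖ : ℂ) ^ 2 + twistedPairing ψ ξ g := by
  have hpair : ∀ ω, (‖twistedXray ψ ξ g ω‖ : ℂ) ^ 2 = ∑ s, ∑ s',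
      g (linePlane ω s) * conj (g (linePlane ω s')) *
        ψ (ξ * symplecticForm (linePlane ω s') (linePlane ω s)) := fun ω => by
    rw [← Complex.mul_conj', twistedXray, map_sum, sum_mul_sum]
    refine sum_congr rfl fun s _ => sum_congr rfl fun s' _ => ?_
    rw [symplecticForm_linePlane, map_mul (starRingEnd ℂ), mul_sub,
      ← AddChar.mul_conj_eq_apply_sub]
    ring
  simp_rw [hpair, twistedPairing]
  rw [sum_linePlane_pairs (fun z w => g z * conj (g w) * ψ (ξ * symplecticForm w z)), nsmul_eq_mul]
  simp only [symplecticForm_self, mul_zero, AddChar.map_zero_eq_one, mul_one, Complex.mul_conj']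

theorem sum_norm_sq_twistedXray_le :
    ∑ ω, ‖twistedXray ψ ξ g ω‖ ^ 2 ≤
      Fintype.card K * ∑ z, ‖g z‖ ^ 2 + ‖twistedPairing ψ ξ g‖ := by
  have hcast := sum_norm_sq_twistedXray ψ ξ g
  norm_cast at hcast
  calc ∑ ω, ‖twistedXray ψ ξ g ω‖ ^ 2
      = ‖(((Fintype.card K * ∑ z, ‖g z‖ ^ 2 : ℝ) : ℂ) + twistedPairing ψ ξ g)‖ := by
        rw [← hcast, Complex.norm_of_nonneg (by positivity)]
    _ ≤ Fintype.card K * ∑ z, ‖g z‖ ^ 2 + ‖twistedPairing ψ ξ g‖ :=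
        (norm_add_le _ _).trans_eq (by rw [Complex.norm_of_nonneg (by positivity)])

theorem norm_twistedPairing_le :
    ‖twistedPairing ψ ξ g‖ ≤ Fintype.card K ^ 2 * ∑ z, ‖g z‖ ^ 2 := by
  calc ‖twistedPairing ψ ξ g‖
      ≤ ∑ z, ∑ w, ‖g z‖ * ‖g w‖ := by
        refine (norm_sum_le _ _).trans (sum_le_sum fun z _ => ?_)
        refine (norm_sum_le _ _).trans_eq (sum_congr rfl fun w _ => ?_)
        rw [norm_mul, norm_mul, AddChar.norm_apply, Complex.norm_conj, mul_one]
    _ = (∑ z, ‖g z‖) ^ 2 := by rw [sq, sum_mul_sum]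
    _ ≤ Fintype.card K ^ 2 * ∑ z, ‖g z‖ ^ 2 := by
        simpa [Fintype.card_prod, sq] using sq_sum_le_card_mul_sum_sq (s := univ) (f := (‖g ·‖))

theorem norm_twistedPairing_le_of_ne_zero [DecidableEq K] (hψ : ψ.IsPrimitive) (hξ : ξ ≠ 0) :
    ‖twistedPairing ψ ξ g‖ ≤ Fintype.card K * ∑ z, ‖g z‖ ^ 2 := by
  set H : K × K → ℂ := fun z => ∑ w, g w * ψ (ξ * symplecticForm z w)
  have hW : twistedPairing ψ ξ g = ∑ z, g z * conj (H z) := by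
    refine sum_congr rfl fun z _ => ?_
    rw [map_sum, mul_sum]
    refine sum_congr rfl fun w _ => ?_
    rw [map_mul (starRingEnd ℂ), ← AddChar.map_neg_eq_conj, symplecticForm_swap z w, mul_neg,
      mul_assoc]
  have hH : ∑ z, ‖H z‖ ^ 2 = Fintype.card K ^ 2 * ∑ z, ‖g z‖ ^ 2 :=
    sum_norm_sq_symplectic_fourier hψ hξ g
  calc ‖twistedPairing ψ ξ g‖
      ≤ ∑ z, ‖g z‖ * ‖H z‖ := by
        rw [hW]
        exact (norm_sum_le _ _).trans_eq (by simp only [norm_mul, Complex.norm_conj])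
    _ ≤ √(∑ z, ‖g z‖ ^ 2) * √(∑ z, ‖H z‖ ^ 2) := Real.sum_mul_le_sqrt_mul_sqrt _ _ _
    _ = Fintype.card K * ∑ z, ‖g z‖ ^ 2 := by
        rw [hH, Real.sqrt_mul (by positivity), Real.sqrt_sq (by positivity), mul_left_comm,
          Real.mul_self_sqrt (by positivity)]

theorem sum_norm_sq_twistedXray_le_two_mul_sq :
    ∑ ω, ‖twistedXray ψ ξ g ω‖ ^ 2 ≤ 2 * Fintype.card K ^ 2 * ∑ z, ‖g z‖ ^ 2 := by
  have hq : (Fintype.card K : ℝ) ≤ Fintype.card K ^ 2 :=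
    le_self_pow₀ (Nat.one_le_cast.mpr Fintype.card_pos) two_ne_zero
  have hg : 0 ≤ ∑ z, ‖g z‖ ^ 2 := by positivity
  nlinarith [sum_norm_sq_twistedXray_le ψ ξ g, norm_twistedPairing_le ψ ξ g,
    mul_le_mul_of_nonneg_right hq hg]

theorem sum_norm_sq_twistedXray_le_of_ne_zero [DecidableEq K] (hψ : ψ.IsPrimitive)
    (hξ : ξ ≠ 0) :
    ∑ ω, ‖twistedXray ψ ξ g ω‖ ^ 2 ≤ 2 * Fintype.card K * ∑ z, ‖g z‖ ^ 2 := by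
  linarith [sum_norm_sq_twistedXray_le ψ ξ g, norm_twistedPairing_le_of_ne_zero ψ ξ g hψ hξ]

end TwistedXray

section Heisenberg

variable {K : Type*} [Field K] [Fintype K] [DecidableEq K] {ψ : AddChar K ℂ}

def vertFourier (ψ : AddChar K ℂ) (F : K × K × K → ℂ) (ξ : K) (z : K × K) : ℂ :=
  ∑ t, F (z.1, z.2, t) * ψ (-(ξ * t))

theorem sum_sum_norm_sq_vertFourier (hψ : ψ.IsPrimitive) (F : K × K × K → ℂ) :
    ∑ ξ, ∑ z, ‖vertFourier ψ F ξ z‖ ^ 2 = Fintype.card K * ∑ p, ‖F p‖ ^ 2 := by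
  rw [sum_comm]
  simp_rw [vertFourier, sum_norm_sq_fourier hψ, ← mul_sum]
  rw [← Fintype.sum_prod_type', ← (Equiv.prodAssoc K K K).sum_comp]
  rfl

theorem natCast_mul_sum_lineRd (hψ : ψ.IsPrimitive) (F : K × K × K → ℂ)
    (ω : Option K × K) (τ : K) :
    Fintype.card K * ∑ s, F (lineRd ω τ s) =
      ∑ ξ, ψ (ξ * τ) * twistedXray ψ ξ (vertFourier ψ F ξ) ω := by
  simp_rw [twistedXray, mul_sum]
  rw [sum_comm]
  refine sum_congr rfl fun s _ => ?_
  rw [lineRd_eq, ← sum_addChar_mul_fourier hψ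
    (fun t => F ((linePlane ω s).1, (linePlane ω s).2, t)) (τ + ω.2 * s)]
  refine sum_congr rfl fun ξ _ => ?_
  rw [vertFourier, mul_add, AddChar.map_add_eq_mul]
  ring

theorem natCast_mul_norm_sum_lineRd_le (hψ : ψ.IsPrimitive) (F : K × K × K → ℂ)
    (ω : Option K × K) (τ : K) :
    Fintype.card K * ‖∑ s, F (lineRd ω τ s)‖ ≤
      ∑ ξ, ‖twistedXray ψ ξ (vertFourier ψ F ξ) ω‖ := by
  have h := congrArg norm (natCast_mul_sum_lineRd hψ F ω τ)
  rw [norm_mul, Complex.norm_natCast] at h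
  rw [h]
  exact (norm_sum_le _ _).trans_eq (by simp only [norm_mul, AddChar.norm_apply, one_mul])

theorem sum_norm_sq_sum_lineRd_le (hψ : ψ.IsPrimitive) (F : K × K × K → ℂ)
    (σ : Option K × K → K) :
    ∑ ω, ‖∑ s, F (lineRd ω (σ ω) s)‖ ^ 2 ≤ 4 * (Fintype.card K : ℝ) * ∑ p, ‖F p‖ ^ 2 := by
  set q : ℝ := (Fintype.card K : ℝ)
  set B : K → Option K × K → ℝ := fun ξ ω => ‖twistedXray ψ ξ (vertFourier ψ F ξ) ω‖
  set N : K → ℝ := fun ξ => ∑ z, ‖vertFourier ψ F ξ z‖ ^ 2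
  have hpt : ∀ ω, q ^ 2 * ‖∑ s, F (lineRd ω (σ ω) s)‖ ^ 2 ≤
      2 * B 0 ω ^ 2 + 2 * q * ∑ ξ ∈ univ.erase 0, B ξ ω ^ 2 := fun ω => by
    rw [← mul_pow]
    refine (pow_le_pow_left₀ (by positivity)
      (natCast_mul_norm_sum_lineRd_le hψ F ω (σ ω)) 2).trans ?_
    simpa [q] using sq_sum_le_two_mul_sq_add univ (mem_univ 0) (B · ω)
  have hsum : q ^ 2 * ∑ ω, ‖∑ s, F (lineRd ω (σ ω) s)‖ ^ 2 ≤
      q ^ 2 * (4 * q * ∑ p, ‖F p‖ ^ 2) := calc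
    q ^ 2 * ∑ ω, ‖∑ s, F (lineRd ω (σ ω) s)‖ ^ 2
      ≤ ∑ ω, (2 * B 0 ω ^ 2 + 2 * q * ∑ ξ ∈ univ.erase 0, B ξ ω ^ 2) := by
        rw [mul_sum]
        exact sum_le_sum fun ω _ => hpt ω
    _ = 2 * ∑ ω, B 0 ω ^ 2 + 2 * q * ∑ ξ ∈ univ.erase 0, ∑ ω, B ξ ω ^ 2 := by
        rw [sum_add_distrib, ← mul_sum, ← mul_sum, sum_comm]
    _ ≤ 2 * (2 * q ^ 2 * N 0) + 2 * q * ∑ ξ ∈ univ.erase 0, 2 * q * N ξ := by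
        gcongr with ξ hξ
        · exact sum_norm_sq_twistedXray_le_two_mul_sq ψ 0 _
        · exact sum_norm_sq_twistedXray_le_of_ne_zero ψ ξ _ hψ (ne_of_mem_erase hξ)
    _ = q ^ 2 * (4 * ∑ ξ, N ξ) := by
        rw [← add_sum_erase univ N (mem_univ 0), ← mul_sum]
        ring
    _ = q ^ 2 * (4 * q * ∑ p, ‖F p‖ ^ 2) := by
        rw [sum_sum_norm_sq_vertFourier hψ F]
        ring
  exact le_of_mul_le_mul_left hsum (by positivity)

end Heisenberg

theorem sum_sq_Mrd_le {K : Type*} [Field K] [Fintype K] (F : K × K × K → ℂ) :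
    ∑ ω, Mrd F ω ^ 2 ≤ 4 * (Fintype.card K : ℝ) * ∑ p, ‖F p‖ ^ 2 := by
  classical
  obtain ⟨ψ, hψ1⟩ := (AddChar.exists_apply_ne_zero (a := (1 : K))).2 one_ne_zero
  have hψ : ψ.IsPrimitive := AddChar.IsPrimitive.of_ne_one fun h => hψ1 (by simp [h])
  have hmax : ∀ ω, ∃ τ, Mrd F ω = ∑ s, ‖F (lineRd ω τ s)‖ := fun ω => by
    obtain ⟨τ, -, h⟩ := exists_mem_eq_sup' ⟨0, mem_univ _⟩ fun τ => ∑ s, ‖F (lineRd ω τ s)‖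
    exact ⟨τ, h⟩
  choose σ hσ using hmax
  have hnorm : ∀ ω, Mrd F ω = ‖∑ s, ((‖F (lineRd ω (σ ω) s)‖ : ℝ) : ℂ)‖ := fun ω => by
    rw [hσ, ← Complex.ofReal_sum, Complex.norm_of_nonneg (by positivity)]
  simp_rw [hnorm]
  simpa using sum_norm_sq_sum_lineRd_le hψ (fun p => (‖F p‖ : ℂ)) σ

section Indicator

variable {K : Type*} [Field K] [Fintype K] [DecidableEq K] (E : Finset (K × K × K))

theorem Mrd_indicator (ω : Option K × K) :
    Mrd (fun p => if p ∈ E then 1 else 0) ω =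
      ((univ.sup fun τ => #{s | lineRd ω τ s ∈ E} : ℕ) : ℝ) := by
  simp only [Mrd, apply_ite norm, norm_one, norm_zero, sum_boole]
  rw [← sup'_eq_sup ⟨0, mem_univ 0⟩]
  exact (apply_sup'_eq_sup'_comp _ _ Nat.cast_max).symm

theorem sum_sq_sup_card_filter_lineRd_le :
    ∑ ω, ((univ.sup fun τ => #{s | lineRd ω τ s ∈ E} : ℕ) : ℝ) ^ 2 ≤
      4 * (Fintype.card K : ℝ) * #E := by
  simpa [Mrd_indicator, apply_ite] using sum_sq_Mrd_le fun p => if p ∈ E then (1 : ℂ) else 0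

end Indicator

/-- A full-direction horizontal Heisenberg Kakeya set
`E ⊆ H₁(F_q)` (containing, for every `ω ∈ D₁`, a full horizontal line with
`Dir L = ω`) satisfies `|E| ≥ q³/25`.  Moreover, with
`M_E(ω) = max_{Dir L = ω} |E ∩ L|`, every set `E' ⊆ H₁(F_q)` satisfies
`∑_{ω ∈ D₁} M_{E'}(ω)² ≤ 25 q |E'|`. -/
theorem stmt_18 {K : Type*} [Field K] [Fintype K] [DecidableEq K]
    (E : Finset (K × K × K))
    (hE : ∀ ω : Option K × K, ∃ τ : K, ∀ s : K, lineRd ω τ s ∈ E) :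
    (Fintype.card K : ℝ) ^ 3 / 25 ≤ (E.card : ℝ) ∧
    ∀ E' : Finset (K × K × K),
      ∑ ω : Option K × K,
        ((Finset.univ.sup fun τ : K =>
          (Finset.univ.filter fun s : K => lineRd ω τ s ∈ E').card : ℕ) : ℝ) ^ 2 ≤
      25 * (Fintype.card K : ℝ) * (E'.card : ℝ) := by
  have hq : (1 : ℝ) ≤ Fintype.card K := Nat.one_le_cast.mpr Fintype.card_pos
  refine ⟨?_, fun E' => (sum_sq_sup_card_filter_lineRd_le E').trans (by gcongr; norm_num)⟩
  have hfull : ∀ ω : Option K × K, (Fintype.card K : ℝ) ^ 2 ≤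
      ((univ.sup fun τ => #{s | lineRd ω τ s ∈ E} : ℕ) : ℝ) ^ 2 := fun ω => by
    obtain ⟨τ, hτ⟩ := hE ω
    have hline : #{s | lineRd ω τ s ∈ E} = Fintype.card K := by
      rw [filter_true_of_mem fun s _ => hτ s, card_univ]
    gcongr
    exact_mod_cast hline ▸ le_sup (f := fun τ => #{s | lineRd ω τ s ∈ E}) (mem_univ τ)
  have hsum := (sum_le_sum fun ω _ => hfull ω).trans (sum_sq_sup_card_filter_lineRd_le E)
  rw [sum_const, card_univ, Fintype.card_prod, Fintype.card_option, nsmul_eq_mul] at hsum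
  push_cast at hsum
  nlinarith
end
end

section
/- Let q be a prime power, let χ : F_q → ℂ be a nontrivial additive character, let ξ ∈ F_q with ξ ≠ 0, and let g : F_q^2 → ℂ. For m, γ ∈ F_q define U(m, γ) = ∑_{x ∈ F_q} g(x, m x − γ) · χ(ξ γ x). Then ∑_{m ∈ F_q} ∑_{γ ∈ F_q} |U(m, γ)|^2 ≤ 2 q · ∑_{x, y ∈ F_q} |g(x, y)|^2. -/
/-!
Expanding `|U(m, γ)|²` and summing over `(m, γ)` leaves a double sum over pairs `(x, y)`.
The diagonal `x = y` contributes `q ∑ |g|²`, because `(m, γ) ↦ m x - γ` covers every value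
`q` times. For `x ≠ y`, `(m, γ) ↦ (u, v) = (m x - γ, m y - γ)` is a bijection of `F_q²` with
`γ (x - y) = y u - x v`, so the pair term factors as `G(x, y) · conj G(y, x)` where
`G(a, b) = ∑_u g(a, u) χ(ξ u b)`. By AM-GM these terms sum to at most `∑ |G|²`, which equals
`q ∑ |g|²` by Plancherel in the second variable.
-/

open Finset ComplexConjugate

lemma sum_sq_norm_sum_eq_re {ι κ : Type*} [Fintype ι] [Fintype κ] (a : κ → ι → ℂ) :
    ∑ k, ‖∑ i, a k i‖ ^ 2 = (∑ i, ∑ j, ∑ k, a k i * conj (a k j)).re := by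
  have expand (k : κ) : ((‖∑ i, a k i‖ ^ 2 : ℝ) : ℂ) = ∑ i, ∑ j, a k i * conj (a k j) := by
    rw [Complex.ofReal_pow, ← Complex.mul_conj', map_sum, sum_mul_sum]
  rw [← Complex.ofReal_re (∑ k, _), Complex.ofReal_sum]
  simp_rw [expand]
  rw [sum_comm]
  simp_rw [sum_comm (s := (univ : Finset κ))]

lemma two_mul_re_mul_conj_le (z w : ℂ) : 2 * (z * conj w).re ≤ ‖z‖ ^ 2 + ‖w‖ ^ 2 := by
  calc 2 * (z * conj w).re ≤ 2 * ‖z‖ * ‖w‖ := by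
        rw [mul_assoc, ← Complex.norm_conj w, ← norm_mul]
        gcongr
        exact Complex.re_le_norm _
    _ ≤ ‖z‖ ^ 2 + ‖w‖ ^ 2 := two_mul_le_add_sq _ _

lemma sum_prod_comp_mul_sub {R M : Type*} [Ring R] [Fintype R] [AddCommMonoid M]
    (x : R) (f : R → M) :
    ∑ p : R × R, f (p.1 * x - p.2) = Fintype.card R • ∑ u, f u := by
  rw [Fintype.sum_prod_type]
  simp_rw [fun m => Fintype.sum_equiv (Equiv.subLeft (m * x)) (fun γ => f (m * x - γ)) f
    (fun _ => rfl)]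
  rw [sum_const, card_univ]

section FiniteField

variable {K : Type*} [Field K] [Fintype K]

namespace AddChar

lemma sum_mul_conj_eq_ite [DecidableEq K] {χ : AddChar K ℂ} (hχ : χ ≠ 1) {s : K} (hs : s ≠ 0)
    (u v : K) :
    ∑ t, χ (s * u * t) * conj (χ (s * v * t)) = if u = v then (Fintype.card K : ℂ) else 0 := by
  have combine (t : K) : χ (s * u * t) * conj (χ (s * v * t)) = χ (t * (s * (u - v))) := by
    rw [← map_neg_eq_conj, ← map_add_eq_mul]
    ring_nf
  simp_rw [combine, sum_mulShift _ (IsPrimitive.of_ne_one hχ)]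
  simp [sub_eq_zero, hs]

lemma sum_sq_norm_sum_mul_apply {χ : AddChar K ℂ} (hχ : χ ≠ 1) {s : K} (hs : s ≠ 0)
    (h : K → ℂ) :
    ∑ t, ‖∑ u, h u * χ (s * u * t)‖ ^ 2 = Fintype.card K * ∑ u, ‖h u‖ ^ 2 := by
  classical
  have inner (u v : K) : ∑ t, h u * χ (s * u * t) * conj (h v * χ (s * v * t)) =
      if u = v then Fintype.card K * ((‖h u‖ ^ 2 : ℝ) : ℂ) else 0 := by
    have factor (t : K) : h u * χ (s * u * t) * conj (h v * χ (s * v * t)) =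
        h u * conj (h v) * (χ (s * u * t) * conj (χ (s * v * t))) := by
      rw [map_mul conj]; ring
    rw [sum_congr rfl fun t _ => factor t, ← mul_sum, sum_mul_conj_eq_ite hχ hs]
    split_ifs with huv
    · rw [huv, Complex.mul_conj', Complex.ofReal_pow, mul_comm]
    · rw [mul_zero]
  rw [sum_sq_norm_sum_eq_re]
  simp_rw [inner, sum_ite_eq, mem_univ, if_true, ← mul_sum, ← Complex.ofReal_sum]
  rw [← Complex.ofReal_natCast, ← Complex.ofReal_mul, Complex.ofReal_re]

end AddChar

lemma sum_prod_comp_mul_sub_mul_sub {M : Type*} [AddCommMonoid M] {x y : K} (hxy : x ≠ y)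
    (f : K × K → M) : ∑ p : K × K, f (p.1 * x - p.2, p.1 * y - p.2) = ∑ p, f p := by
  refine Fintype.sum_bijective _ (Finite.injective_iff_bijective.mp ?_) _ _ fun _ => rfl
  rintro ⟨m₁, γ₁⟩ ⟨m₂, γ₂⟩ h
  simp only [Prod.mk.injEq] at h
  have hm : m₁ = m₂ := mul_right_cancel₀ (sub_ne_zero.mpr hxy) (by linear_combination h.1 - h.2)
  have hγ : γ₁ = γ₂ := by linear_combination hm * x - h.1
  rw [hm, hγ]

variable (χ : AddChar K ℂ) (ξ : K) (g : K × K → ℂ)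

def lineTerm (p : K × K) (x : K) : ℂ := g (x, p.1 * x - p.2) * χ (ξ * p.2 * x)

def rowTransform (a b : K) : ℂ := ∑ u, g (a, u) * χ (ξ * u * b)

lemma sum_lineTerm_mul_conj_self (x : K) :
    ∑ p, lineTerm χ ξ g p x * conj (lineTerm χ ξ g p x) =
      ((Fintype.card K * ∑ u, ‖g (x, u)‖ ^ 2 : ℝ) : ℂ) := by
  simp_rw [Complex.mul_conj', lineTerm, norm_mul, AddChar.norm_apply, mul_one,
    ← Complex.ofReal_pow, ← Complex.ofReal_sum,
    sum_prod_comp_mul_sub x (fun u => ‖g (x, u)‖ ^ 2), nsmul_eq_mul]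

lemma sum_lineTerm_mul_conj_of_ne {x y : K} (hxy : x ≠ y) :
    ∑ p, lineTerm χ ξ g p x * conj (lineTerm χ ξ g p y) =
      rowTransform χ ξ g x y * conj (rowTransform χ ξ g y x) := by
  rw [rowTransform, rowTransform, map_sum, sum_mul_sum, ← Fintype.sum_prod_type']
  conv_rhs => rw [← sum_prod_comp_mul_sub_mul_sub hxy]
  refine sum_congr rfl fun p _ => ?_
  have phase : χ (ξ * p.2 * x) * conj (χ (ξ * p.2 * y)) =
      χ (ξ * (p.1 * x - p.2) * y) * conj (χ (ξ * (p.1 * y - p.2) * x)) := by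
    simp_rw [← AddChar.map_neg_eq_conj, ← AddChar.map_add_eq_mul]
    ring_nf
  simp only [lineTerm, map_mul]
  linear_combination (g (x, p.1 * x - p.2) * conj (g (y, p.1 * y - p.2))) * phase

lemma two_mul_re_sum_lineTerm_mul_conj_le [DecidableEq K] (x y : K) :
    2 * (∑ p, lineTerm χ ξ g p x * conj (lineTerm χ ξ g p y)).re ≤
      ‖rowTransform χ ξ g x y‖ ^ 2 + ‖rowTransform χ ξ g y x‖ ^ 2 +
        if x = y then 2 * (Fintype.card K * ∑ u, ‖g (x, u)‖ ^ 2) else 0 := by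
  split_ifs with hxy
  · rw [hxy, sum_lineTerm_mul_conj_self, Complex.ofReal_re]
    linarith [sq_nonneg ‖rowTransform χ ξ g y y‖]
  · rw [sum_lineTerm_mul_conj_of_ne χ ξ g hxy, add_zero]
    exact two_mul_re_mul_conj_le _ _

lemma sum_sq_norm_rowTransform (hχ : χ ≠ 1) (hξ : ξ ≠ 0) (a : K) :
    ∑ b, ‖rowTransform χ ξ g a b‖ ^ 2 = Fintype.card K * ∑ u, ‖g (a, u)‖ ^ 2 :=
  AddChar.sum_sq_norm_sum_mul_apply hχ hξ _

end FiniteField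

/-- key counting inequality for nonzero central frequencies.
Let `χ` be a nontrivial additive character of `F_q`, let `ξ ∈ F_q^*`, and let
`g : F_q² → ℂ`.  With `U(m, γ) = ∑_x g(x, m x - γ) χ(ξ γ x)`, one has
`∑_{m, γ} |U(m, γ)|² ≤ 2 q ∑_{x, y} |g(x, y)|²`. -/
theorem stmt_19 {K : Type*} [Field K] [Fintype K]
    (χ : AddChar K ℂ) (hχ : χ ≠ 1) (ξ : K) (hξ : ξ ≠ 0) (g : K × K → ℂ) :
    ∑ m : K, ∑ γ : K,
        ‖∑ x : K, g (x, m * x - γ) * χ (ξ * γ * x)‖ ^ 2 ≤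
      2 * (Fintype.card K : ℝ) * ∑ x : K, ∑ y : K, ‖g (x, y)‖ ^ 2 := by
  classical
  have expand : ∑ m : K, ∑ γ : K, ‖∑ x : K, g (x, m * x - γ) * χ (ξ * γ * x)‖ ^ 2 =
      ∑ x, ∑ y, (∑ p, lineTerm χ ξ g p x * conj (lineTerm χ ξ g p y)).re := by
    rw [← Fintype.sum_prod_type' (fun m γ => ‖∑ x, g (x, m * x - γ) * χ (ξ * γ * x)‖ ^ 2),
      sum_sq_norm_sum_eq_re, Complex.re_sum]
    simp_rw [Complex.re_sum, lineTerm]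
  have plancherel : ∑ x, ∑ y, ‖rowTransform χ ξ g x y‖ ^ 2 =
      Fintype.card K * ∑ x, ∑ y, ‖g (x, y)‖ ^ 2 := by
    simp_rw [sum_sq_norm_rowTransform χ ξ g hχ hξ, mul_sum]
  have total := sum_le_sum fun x (_ : x ∈ univ) => sum_le_sum fun y (_ : y ∈ univ) =>
    two_mul_re_sum_lineTerm_mul_conj_le χ ξ g x y
  simp_rw [sum_add_distrib, sum_ite_eq, mem_univ, if_true, ← mul_sum] at total
  rw [sum_comm (f := fun x y => ‖rowTransform χ ξ g y x‖ ^ 2), plancherel, ← expand] at total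
  linarith
end
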